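/- Let F be a linear ordered field with an order positive presentation ν : ℕ → F, and let f be a polynomial over F. Then the set {n : ℕ | the polynomial f' − ν(n) (the derivative of f minus the constant ν(n)) is separable} is computably enumerable, i.e., it is the domain of some partial computable function ℕ →. ℕ. -/

import Mathlib

/-!
A polynomial `g - c` over a field of characteristic zero fails to be separable only when `c` is
a critical value `g(a)`, `g'(a) = 0`, of `g` in an algebraic closure, so for `g = f'` only finitely
many values `ν n` are not admissible. Each condition `ν n ≠ c` is c.e., being `ν n < c ∨ c < ν n`,
and a finite intersection of c.e. sets is c.e.
-/

open Polynomial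

/-- A set of natural numbers is computably enumerable if it is the domain of some
partial computable function `ℕ →. ℕ`. -/
def CESet (S : Set ℕ) : Prop :=
  ∃ g : ℕ →. ℕ, Partrec g ∧ ∀ n, (g n).Dom ↔ n ∈ S

/-- `ν : ℕ → F` is an order positive presentation of the linear ordered field `F`. -/
structure OrderPosPres (F : Type*) [Field F] [LinearOrder F] [IsStrictOrderedRing F] (ν : ℕ → F) : Prop where
  surj : Function.Surjective ν
  add : ∃ a : ℕ → ℕ → ℕ, Computable₂ a ∧ ∀ n k, ν (a n k) = ν n + ν k
  mul : ∃ m : ℕ → ℕ → ℕ, Computable₂ m ∧ ∀ n k, ν (m n k) = ν n * ν k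
  lt : CESet {p : ℕ | ∃ n k, p = Nat.pair n k ∧ ν n < ν k}
  inv : ∃ g : ℕ →. ℕ, Partrec g ∧ ∀ n, ν n ≠ 0 → ∃ v ∈ g n, ν v = (ν n)⁻¹

namespace CESet

theorem univ : CESet Set.univ :=
  ⟨fun _ => Part.some 0, Computable.const 0, fun _ => by simp⟩

theorem inter {A B : Set ℕ} (hA : CESet A) (hB : CESet B) : CESet (A ∩ B) := by
  obtain ⟨gA, hgA, hdA⟩ := hA
  obtain ⟨gB, hgB, hdB⟩ := hB
  refine ⟨fun n => (gA n).bind fun _ => gB n, hgA.bind (hgB.comp Computable.fst).to₂, fun n => ?_⟩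
  simp only [Part.bind_dom, exists_prop]
  exact and_congr (hdA n) (hdB n)

theorem union {A B : Set ℕ} (hA : CESet A) (hB : CESet B) : CESet (A ∪ B) := by
  obtain ⟨gA, hgA, hdA⟩ := hA
  obtain ⟨gB, hgB, hdB⟩ := hB
  obtain ⟨g, hg, hdom⟩ := Partrec.merge' hgA hgB
  exact ⟨g, hg, fun n => by rw [(hdom n).2, hdA, hdB]; rfl⟩

theorem preimage {A : Set ℕ} (hA : CESet A) {h : ℕ → ℕ} (hh : Computable h) :
    CESet (h ⁻¹' A) := by
  obtain ⟨g, hg, hdom⟩ := hA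
  exact ⟨fun n => g (h n), hg.comp hh, fun n => hdom (h n)⟩

end CESet

namespace OrderPosPres

variable {F : Type*} [Field F] [LinearOrder F] [IsStrictOrderedRing F] {ν : ℕ → F}

theorem ceSet_lt (hν : OrderPosPres F ν) {h₁ h₂ : ℕ → ℕ} (hh₁ : Computable h₁)
    (hh₂ : Computable h₂) : CESet {n | ν (h₁ n) < ν (h₂ n)} := by
  convert hν.lt.preimage (Primrec₂.natPair.to_comp.comp hh₁ hh₂) using 1
  ext n
  simp only [Set.mem_ofPred_eq, Set.mem_preimage, Nat.pair_eq_pair]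
  exact ⟨fun h => ⟨_, _, ⟨rfl, rfl⟩, h⟩, fun ⟨_, _, ⟨hn, hk⟩, h⟩ => hn ▸ hk ▸ h⟩

theorem ceSet_ne (hν : OrderPosPres F ν) (c : F) : CESet {n | ν n ≠ c} := by
  obtain ⟨k, rfl⟩ := hν.surj c
  convert (hν.ceSet_lt .id (.const k)).union (hν.ceSet_lt (.const k) .id) using 1
  ext n
  exact ne_iff_lt_or_gt

theorem ceSet_notMem (hν : OrderPosPres F ν) {S : Set F} (hS : S.Finite) :
    CESet {n | ν n ∉ S} := by
  induction S, hS using Set.Finite.induction_on with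
  | empty => simpa using CESet.univ
  | @insert c S _ _ ih =>
    convert (hν.ceSet_ne c).inter ih using 1
    ext n
    simp only [Set.mem_insert_iff, not_or, Set.mem_ofPred_eq, Set.mem_inter_iff]

end OrderPosPres

namespace Polynomial

variable {F : Type*} [Field F]

theorem exists_aeval_eq_of_not_separable_sub_C {g : F[X]} {c : F} (h : ¬(g - C c).Separable) :
    ∃ a : AlgebraicClosure F, aeval a (derivative g) = 0 ∧ aeval a g = algebraMap F _ c := by
  have := (isCoprime_iff_aeval_ne_zero_of_isAlgClosed F (AlgebraicClosure F) _ _).not.1 h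
  push Not at this
  obtain ⟨a, ha, hda⟩ := this
  exact ⟨a, by simpa using hda, by simpa [sub_eq_zero] using ha⟩

theorem finite_setOf_not_separable_sub_C [CharZero F] (g : F[X]) :
    {c : F | ¬(g - C c).Separable}.Finite := by
  set K := AlgebraicClosure F
  have hcrit := ((derivative g).rootSet_finite K).image (aeval · g)
  refine ((hcrit.preimage (algebraMap F K).injective.injOn).insert (g.coeff 0)).subset
    fun c hc => ?_
  obtain ⟨a, hda, hga⟩ := exists_aeval_eq_of_not_separable_sub_C hc
  by_cases hg : derivative g = 0
  · left
    rw [eq_C_of_derivative_eq_zero hg, aeval_C] at hga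
    exact ((algebraMap F K).injective hga).symm
  · right
    exact ⟨a, (mem_rootSet_of_ne hg).2 hda, hga⟩

end Polynomial

/-- For an order positive field `(F, ν)` and a polynomial `f` over `F`, the set of
indices `n` such that `ν n` is admissible for `f` (i.e. `f' - ν n` is separable) is
computably enumerable. -/
theorem ce_admissible_indices
    {F : Type*} [Field F] [LinearOrder F] [IsStrictOrderedRing F] (ν : ℕ → F) (hν : OrderPosPres F ν)
    (f : Polynomial F) :
    CESet {n : ℕ | (derivative f - C (ν n)).Separable} := by
  simpa using hν.ceSet_notMem (derivative f).finite_setOf_not_separable_sub_C
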